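/- arXiv:2302.00742 — 7 statements merged into one kernel-verified Lean document; each statement's English description precedes it below -/
import Mathlib

section
/- Let P = (u_1, …, u_ℓ) be a path in a finite simple graph G. If P is not cycled, then P is sociable. -/
/-!
Index the path as `u₀, …, u_ℓ`. Since `a = u₀` and `b = u_ℓ` are not adjacent to themselves,
`d_P(a)` counts the `j < ℓ` with `a ~ u_{j+1}` and `d_P(b)` counts the `j < ℓ` with `u_j ~ b`.
A non-cycled path has no `j` of both kinds, so `d_P(a) + d_P(b) ≤ ℓ = |V(P)| - 1`.
-/

/-- `P` is a *cycled* path: either its endpoints are adjacent, or there exists an edge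
`{uᵢ, uᵢ₊₁}` of `P` such that the first endpoint is adjacent to `uᵢ₊₁` and `uᵢ` is
adjacent to the last endpoint. -/
def SimpleGraph.Walk.IsCycled {V : Type*} {G : SimpleGraph V} {a b : V}
    (P : G.Walk a b) : Prop :=
  G.Adj a b ∨ ∃ j < P.length, G.Adj a (P.getVert (j + 1)) ∧ G.Adj (P.getVert j) b

/-- `dOn G P x` is the number of neighbors of `x` in `G` that lie on the walk `P`. -/
def dOn {V : Type*} [DecidableEq V] (G : SimpleGraph V) [DecidableRel G.Adj]
    {a b : V} (P : G.Walk a b) (x : V) : ℕ :=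
  (P.support.toFinset.filter (fun y => G.Adj x y)).card

open Finset

namespace SimpleGraph.Walk

variable {V : Type*} [DecidableEq V] {G : SimpleGraph V} {a b : V}

theorem support_toFinset_eq_image_getVert (P : G.Walk a b) :
    P.support.toFinset = (range (P.length + 1)).image P.getVert := by
  ext y
  simp only [List.mem_toFinset, mem_image, mem_range, Nat.lt_succ_iff,
    mem_support_iff_exists_getVert]
  exact ⟨fun ⟨n, hn, hle⟩ => ⟨n, hle, hn⟩, fun ⟨n, hle, hn⟩ => ⟨n, hn, hle⟩⟩

theorem IsPath.card_filter_support_toFinset {P : G.Walk a b} (hP : P.IsPath)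
    (p : V → Prop) [DecidablePred p] :
    #(P.support.toFinset.filter p) =
      ∑ j ∈ range (P.length + 1), if p (P.getVert j) then 1 else 0 := by
  rw [support_toFinset_eq_image_getVert, filter_image, card_image_of_injOn, card_filter]
  exact hP.getVert_injOn.mono fun j hj => by
    simp only [coe_filter, mem_range] at hj
    exact Nat.lt_succ_iff.mp hj.1

theorem IsPath.card_support_toFinset {P : G.Walk a b} (hP : P.IsPath) :
    #P.support.toFinset = P.length + 1 := by
  rw [List.toFinset_card_of_nodup hP.support_nodup, length_support]

end SimpleGraph.Walk

open SimpleGraph SimpleGraph.Walk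

section

variable {V : Type*} [DecidableEq V] {G : SimpleGraph V} [DecidableRel G.Adj] {a b : V}

theorem dOn_start_eq_sum {P : G.Walk a b} (hP : P.IsPath) :
    dOn G P a = ∑ j ∈ range P.length, if G.Adj a (P.getVert (j + 1)) then 1 else 0 := by
  rw [dOn, hP.card_filter_support_toFinset, sum_range_succ', getVert_zero]
  simp

theorem dOn_end_eq_sum {P : G.Walk a b} (hP : P.IsPath) :
    dOn G P b = ∑ j ∈ range P.length, if G.Adj b (P.getVert j) then 1 else 0 := by
  rw [dOn, hP.card_filter_support_toFinset, sum_range_succ, getVert_length]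
  simp

end

/-- If a path `P = (u₁, …, u_ℓ)` is not cycled, then it is sociable, i.e.
`d_P(u₁) + d_P(u_ℓ) + 1 ≤ |V(P)|`. -/
theorem stmt0 {V : Type*} [DecidableEq V] (G : SimpleGraph V) [DecidableRel G.Adj]
    {a b : V} (P : G.Walk a b) (hP : P.IsPath) (hnc : ¬ P.IsCycled) :
    dOn G P a + dOn G P b + 1 ≤ P.support.toFinset.card := by
  calc dOn G P a + dOn G P b + 1
      = ∑ j ∈ range P.length, ((if G.Adj a (P.getVert (j + 1)) then 1 else 0) +
          (if G.Adj b (P.getVert j) then 1 else 0)) + 1 := by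
        rw [sum_add_distrib, dOn_start_eq_sum hP, dOn_end_eq_sum hP]
    _ ≤ ∑ _j ∈ range P.length, 1 + 1 := by
        gcongr with j hj
        have := fun ha hb => hnc (Or.inr ⟨j, mem_range.mp hj, ha, Adj.symm hb⟩)
        split_ifs <;> simp_all
    _ = #P.support.toFinset := by
        rw [sum_const, card_range, smul_eq_mul, mul_one, hP.card_support_toFinset]
end

section
/- Let P be a path in a finite simple graph G with |V(P)| ≥ 3. If P is cycled, then the subgraph of G induced on the vertex set V(P) contains a Hamiltonian cycle (a cycle visiting every vertex of V(P) exactly once). -/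
/-!
Write `P = u₀ u₁ … u_ℓ`. If `u₀ ~ u_{j+1}` and `u_j ~ u_ℓ`, then
`u₀ u_{j+1} u_{j+2} … u_ℓ u_j u_{j-1} … u₀` is a cycle through all vertices of `P`;
adjacency of the endpoints is the case `j = 0` of this. A cycle is Hamiltonian in the
subgraph induced on its own vertex set.
-/

namespace SimpleGraph.Walk

variable {V : Type*} {G : SimpleGraph V}

lemma IsCycled.exists_crossing {a b : V} {P : G.Walk a b} (hc : P.IsCycled) (hP : ¬ P.Nil) :
    ∃ j < P.length, G.Adj a (P.getVert (j + 1)) ∧ G.Adj (P.getVert j) b := by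
  rcases hc with hab | hj
  · have hlen : 0 < P.length := not_nil_iff_lt_length.mp hP
    exact ⟨0, hlen, by simpa using P.adj_getVert_succ hlen, by simpa using hab⟩
  · exact hj

def crossover {a b : V} (P : G.Walk a b) (j : ℕ) (h : G.Adj (P.getVert j) b) :
    G.Walk (P.getVert (j + 1)) a :=
  (P.drop (j + 1)).append (cons h.symm (P.take j).reverse)

lemma support_crossover_perm {a b : V} (P : G.Walk a b) {j : ℕ} (hj : j < P.length)
    (h : G.Adj (P.getVert j) b) : (P.crossover j h).support.Perm P.support := by
  rw [crossover, support_append, support_cons, List.tail_cons, support_reverse, support_take,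
    drop_support_eq_support_drop_min, min_eq_left hj]
  refine ((List.reverse_perm _).append_left _).trans (List.perm_append_comm.trans ?_)
  rw [List.take_append_drop]

lemma length_crossover {a b : V} (P : G.Walk a b) {j : ℕ} (hj : j < P.length)
    (h : G.Adj (P.getVert j) b) : (P.crossover j h).length = P.length := by
  simpa only [length_support, Nat.add_right_cancel_iff] using
    (P.support_crossover_perm hj h).length_eq

lemma IsPath.crossover {a b : V} {P : G.Walk a b} (hP : P.IsPath) {j : ℕ} (hj : j < P.length)
    (h : G.Adj (P.getVert j) b) : (P.crossover j h).IsPath :=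
  IsPath.mk' ((P.support_crossover_perm hj h).nodup_iff.mpr hP.support_nodup)

lemma IsPath.isCycle_cons {u v : V} {p : G.Walk v u} (hp : p.IsPath) (h : G.Adj u v)
    (hlen : 2 ≤ p.length) : (cons h p).IsCycle := by
  refine (cons_isCycle_iff p h).mpr ⟨hp, fun he => ?_⟩
  have := hp.length_eq_one_of_mem_edges (Sym2.eq_swap ▸ he)
  omega

lemma IsCycle.isHamiltonianCycle_induce [DecidableEq V] {u : V} {C : G.Walk u u} {s : Set V}
    (hC : C.IsCycle) (hs : ∀ v, v ∈ C.support ↔ v ∈ s) :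
    (C.induce s fun v => (hs v).1).IsHamiltonianCycle := by
  have hC' : (C.induce s fun v => (hs v).1).IsCycle := by
    rwa [← isCycle_map_iff_of_injective (f := (Embedding.induce s).toHom) Subtype.val_injective,
      map_induce]
  refine isHamiltonianCycle_isCycle_and_isHamiltonian_tail.mpr
    ⟨hC', hC'.isPath_tail.isHamiltonian_of_mem fun x => ?_⟩
  rw [support_tail_of_not_nil _ hC'.not_nil]
  have hx : x ∈ (C.induce s fun v => (hs v).1).support := by
    simpa [support_induce] using (hs x).2 x.2
  rcases (mem_support_iff _).mp hx with rfl | hx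
  · exact end_mem_tail_support hC'.not_nil
  · exact hx

end SimpleGraph.Walk

open SimpleGraph Walk in
/-- If a path `P` with at least `3` vertices is cycled, then the subgraph of `G`
induced on the vertex set of `P` contains a Hamiltonian cycle. -/
theorem stmt1 {V : Type*} [DecidableEq V] (G : SimpleGraph V)
    {a b : V} (P : G.Walk a b) (hP : P.IsPath)
    (h3 : 3 ≤ P.support.toFinset.card) (hc : P.IsCycled) :
    ∃ (x : ({v | v ∈ P.support} : Set V))
      (c : (G.induce {v | v ∈ P.support}).Walk x x), c.IsHamiltonianCycle := by
  have hlen : 2 ≤ P.length := by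
    rw [List.toFinset_card_of_nodup hP.support_nodup, length_support] at h3
    omega
  obtain ⟨j, hj, h1, h2⟩ := hc.exists_crossing (not_nil_iff_lt_length.mpr (by omega))
  have hC := (hP.crossover hj h2).isCycle_cons h1 (by rwa [length_crossover _ hj])
  refine ⟨_, _, hC.isHamiltonianCycle_induce fun v => ?_⟩
  rw [support_cons, List.mem_cons, (P.support_crossover_perm hj h2).mem_iff, Set.mem_ofPred_eq]
  exact or_iff_right_of_imp fun hv => hv ▸ P.start_mem_support
end

section
/- Let G be a Dirac graph on n vertices. Let F be a maximal matching of G, let F' be the set of vertices matched by F, and let S be a maximal matching of the graph obtained from G by removing all edges with both endpoints in F'. Then every vertex of G is the endpoint of some edge in F ∪ S, and every connected component of the spanning subgraph of G with edge set F ∪ S is a path with at least 2 and at most 4 vertices. -/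
/-!
Maximality of `F` makes the vertices not covered by `F` independent in `G`, so every edge of `S`
joins an `F`-covered vertex to an `F`-uncovered one. If a vertex `x` were covered by neither
matching, every neighbour `y` of `x` would be `F`-covered and, since `xy` survives in the reduced
graph, maximality of `S` matches `y` in `S` to an `F`-uncovered vertex other than `x`. These
partners are pairwise distinct, so `deg x` is at most the number of `F`-covered vertices and at
most the number of `F`-uncovered vertices other than `x`; hence `2 deg x < n`, against the Dirac
condition. Each component of `F ∪ S` therefore consists of one edge `uv` of `F` together with
the `S`-partners of `u` and of `v`, i.e. it is a path `p - u - v - q` in which `p` and `q` may be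
missing.
-/

/-- A matching of `G` given as a set of edges: a set of edges of `G` that are pairwise
vertex-disjoint. -/
def IsMatchingSet {V : Type*} (G : SimpleGraph V) (M : Set (Sym2 V)) : Prop :=
  M ⊆ G.edgeSet ∧ ∀ e ∈ M, ∀ f ∈ M, e ≠ f → ∀ x, x ∈ e → x ∉ f

/-- A maximal matching of `G`: a matching such that no edge of `G` can be added to it while
keeping it a matching. -/
def IsMaximalMatchingSet {V : Type*} (G : SimpleGraph V) (M : Set (Sym2 V)) : Prop :=
  IsMatchingSet G M ∧ ∀ e ∈ G.edgeSet, e ∉ M → ∃ f ∈ M, ∃ x, x ∈ e ∧ x ∈ f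

open SimpleGraph Finset

section

variable {V : Type*}

namespace SimpleGraph

variable {H : SimpleGraph V}

lemma Reachable.mem_of_forall_adj {T : Set V} (hT : ∀ a ∈ T, ∀ b, H.Adj a b → b ∈ T)
    {x y : V} (hxy : H.Reachable x y) (hx : x ∈ T) : y ∈ T := by
  obtain ⟨w⟩ := hxy
  induction w with
  | nil => exact hx
  | cons h _ ih => exact ih (hT _ hx _ h)

namespace Walk

lemma reachable_of_mem_support {a c y : V} (w : H.Walk a c) (hy : y ∈ w.support) :
    H.Reachable a y := by
  obtain ⟨q, -, -⟩ := mem_support_iff_exists_append.mp hy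
  exact q.reachable

lemma mem_support_iff_reachable {a c x : V} (w : H.Walk a c)
    (hw : ∀ y ∈ w.support, ∀ z, H.Adj y z → z ∈ w.support) (hx : x ∈ w.support) (y : V) :
    y ∈ w.support ↔ H.Reachable x y :=
  ⟨fun hy => (w.reachable_of_mem_support hx).symm.trans (w.reachable_of_mem_support hy),
    fun hxy => hxy.mem_of_forall_adj hw hx⟩

lemma IsPath.exists_cons_of_subsingleton {a c : V} {w : H.Walk a c} (hw : w.IsPath)
    {P : Set V} (hP : P.Subsingleton) (hadj : ∀ p ∈ P, H.Adj p a)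
    (hnot : ∀ p ∈ P, p ∉ w.support) :
    ∃ (b : V) (w' : H.Walk b c), w'.IsPath ∧ (∀ y, y ∈ w'.support ↔ y ∈ P ∨ y ∈ w.support) ∧
      w.length ≤ w'.length ∧ w'.length ≤ w.length + 1 := by
  rcases P.eq_empty_or_nonempty with rfl | ⟨p, hp⟩
  · exact ⟨a, w, hw, by simp, le_rfl, by omega⟩
  · refine ⟨p, cons (hadj p hp) w, hw.cons (hnot p hp), fun y => ?_, by simp, by simp⟩
    simp only [support_cons, List.mem_cons]
    exact or_congr_left ⟨fun hy => hy ▸ hp, fun hy => hP hy hp⟩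

end Walk

end SimpleGraph

/-- For a matching `F` this is the paper's `F'`. -/
def matchedVerts (M : Set (Sym2 V)) : Set V := {x | ∃ e ∈ M, x ∈ e}

namespace IsMatchingSet

variable {G : SimpleGraph V} {M : Set (Sym2 V)} {a b c : V}

lemma ne_of_mem (hM : IsMatchingSet G M) (hab : s(a, b) ∈ M) : a ≠ b :=
  (G.mem_edgeSet.mp (hM.1 hab)).ne

lemma eq_of_mem_of_mem (hM : IsMatchingSet G M) (hab : s(a, b) ∈ M) (hac : s(a, c) ∈ M) :
    b = c := by
  by_contra hbc
  exact hM.2 _ hab _ hac (mt Sym2.congr_right.mp hbc) a (Sym2.mem_mk_left a b)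
    (Sym2.mem_mk_left a c)

lemma notMem_matchedVerts_of_mem {F : Set (Sym2 V)}
    (hM : IsMatchingSet (G.deleteEdges {e | ∀ x ∈ e, x ∈ matchedVerts F}) M)
    (hab : s(a, b) ∈ M) (ha : a ∈ matchedVerts F) : b ∉ matchedVerts F := by
  intro hb
  have hab' := hM.1 hab
  rw [edgeSet_deleteEdges] at hab'
  exact hab'.2 fun x hx => (Sym2.mem_iff.mp hx).elim (· ▸ ha) (· ▸ hb)

end IsMatchingSet

lemma IsMaximalMatchingSet.mem_matchedVerts_of_adj {G : SimpleGraph V} {M : Set (Sym2 V)}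
    (hM : IsMaximalMatchingSet G M) {x y : V} (hxy : G.Adj x y) (hx : x ∉ matchedVerts M) :
    y ∈ matchedVerts M := by
  by_contra hy
  obtain ⟨f, hf, z, hz, hzf⟩ := hM.2 _ hxy fun h => hx ⟨_, h, Sym2.mem_mk_left x y⟩
  rcases Sym2.mem_iff.mp hz with rfl | rfl
  exacts [hx ⟨f, hf, hzf⟩, hy ⟨f, hf, hzf⟩]

section TwoRoundMatching

variable {G : SimpleGraph V} {F S : Set (Sym2 V)}

lemma exists_partner_of_adj (hF : IsMaximalMatchingSet G F)
    (hS : IsMaximalMatchingSet (G.deleteEdges {e | ∀ x ∈ e, x ∈ matchedVerts F}) S) {x y : V}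
    (hxF : x ∉ matchedVerts F) (hxS : x ∉ matchedVerts S) (hxy : G.Adj x y) :
    ∃ p, s(y, p) ∈ S ∧ p ∉ matchedVerts F ∧ p ≠ x := by
  have hyF := hF.mem_matchedVerts_of_adj hxy hxF
  have hxy' : (G.deleteEdges {e | ∀ x ∈ e, x ∈ matchedVerts F}).Adj x y :=
    deleteEdges_adj.mpr ⟨hxy, fun h => hxF (h x (Sym2.mem_mk_left x y))⟩
  obtain ⟨f, hf, hyf⟩ := hS.mem_matchedVerts_of_adj hxy' hxS
  obtain ⟨p, rfl⟩ := Sym2.mem_iff_exists.mp hyf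
  refine ⟨p, hf, hS.1.notMem_matchedVerts_of_mem hf hyF, ?_⟩
  rintro rfl
  exact hxS ⟨_, hf, Sym2.mem_mk_right y p⟩

lemma two_mul_degree_lt_card [Fintype V] [DecidableRel G.Adj] (hF : IsMaximalMatchingSet G F)
    (hS : IsMaximalMatchingSet (G.deleteEdges {e | ∀ x ∈ e, x ∈ matchedVerts F}) S) {x : V}
    (hxF : x ∉ matchedVerts F) (hxS : x ∉ matchedVerts S) :
    2 * G.degree x < Fintype.card V := by
  classical
  choose! p hpS hpF hpx using fun y (hy : y ∈ G.neighborFinset x) =>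
    exists_partner_of_adj hF hS hxF hxS ((G.mem_neighborFinset x y).mp hy)
  set A := univ.filter (· ∈ matchedVerts F)
  set B := univ.filter (· ∉ matchedVerts F)
  have hA : G.degree x ≤ #A := card_le_card fun y hy => mem_filter.mpr
    ⟨mem_univ y, hF.mem_matchedVerts_of_adj ((G.mem_neighborFinset x y).mp hy) hxF⟩
  have hB : G.degree x ≤ #(B.erase x) := by
    refine card_le_card_of_injOn p (fun y hy => ?_) fun y₁ hy₁ y₂ hy₂ hp => ?_
    · exact mem_erase.mpr ⟨hpx y hy, mem_filter.mpr ⟨mem_univ _, hpF y hy⟩⟩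
    · have h₁ : s(p y₂, y₁) ∈ S := Sym2.eq_swap ▸ hp ▸ hpS y₁ hy₁
      exact hS.1.eq_of_mem_of_mem h₁ (Sym2.eq_swap ▸ hpS y₂ hy₂)
  have hAB : #A + #B = Fintype.card V := by
    rw [card_filter_add_card_filter_not, card_univ]
  have hxB : #(B.erase x) + 1 = #B := card_erase_add_one (mem_filter.mpr ⟨mem_univ x, hxF⟩)
  omega

lemma mem_matchedVerts_union [Fintype V] [DecidableRel G.Adj]
    (hDirac : ∀ x : V, Fintype.card V ≤ 2 * G.degree x) (hF : IsMaximalMatchingSet G F)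
    (hS : IsMaximalMatchingSet (G.deleteEdges {e | ∀ x ∈ e, x ∈ matchedVerts F}) S) (x : V) :
    x ∈ matchedVerts (F ∪ S) := by
  by_contra hx
  refine (two_mul_degree_lt_card hF hS (x := x) ?_ ?_).not_ge (hDirac x)
  · exact fun ⟨e, he, hxe⟩ => hx ⟨e, Or.inl he, hxe⟩
  · exact fun ⟨e, he, hxe⟩ => hx ⟨e, Or.inr he, hxe⟩

/-- The vertex set of the component of `F ∪ S` through an edge `uv` of `F`. -/
def edgeBlock (S : Set (Sym2 V)) (u v : V) : Set V :=
  {y | y = u ∨ y = v ∨ s(u, y) ∈ S ∨ s(v, y) ∈ S}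

lemma edgeBlock_comm (u v : V) : edgeBlock S u v = edgeBlock S v u := by
  ext y
  simp only [edgeBlock, Set.mem_ofPred_eq]
  tauto

lemma exists_mem_edgeBlock (hF : IsMaximalMatchingSet G F)
    (hS : IsMatchingSet (G.deleteEdges {e | ∀ x ∈ e, x ∈ matchedVerts F}) S) {x : V}
    (hx : x ∈ matchedVerts (F ∪ S)) : ∃ u v, s(u, v) ∈ F ∧ x ∈ edgeBlock S u v := by
  by_cases hxF : x ∈ matchedVerts F
  · obtain ⟨f, hf, hxf⟩ := hxF
    obtain ⟨v, rfl⟩ := Sym2.mem_iff_exists.mp hxf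
    exact ⟨x, v, hf, Or.inl rfl⟩
  · obtain ⟨f, hf | hf, hxf⟩ := hx
    · exact absurd ⟨f, hf, hxf⟩ hxF
    obtain ⟨p, rfl⟩ := Sym2.mem_iff_exists.mp hxf
    obtain ⟨g, hg, hpg⟩ := hF.mem_matchedVerts_of_adj (hS.1 hf).1 hxF
    obtain ⟨v, rfl⟩ := Sym2.mem_iff_exists.mp hpg
    exact ⟨p, v, hg, Or.inr (Or.inr (Or.inl (Sym2.eq_swap ▸ hf)))⟩

lemma mem_edgeBlock_of_adj_of_mem_left (hF : IsMatchingSet G F)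
    (hS : IsMatchingSet (G.deleteEdges {e | ∀ x ∈ e, x ∈ matchedVerts F}) S) {u v a b : V}
    (huv : s(u, v) ∈ F) (ha : a = u ∨ s(u, a) ∈ S) (hab : (fromEdgeSet (F ∪ S)).Adj a b) :
    b ∈ edgeBlock S u v := by
  obtain ⟨habF | habS, -⟩ := (fromEdgeSet_adj _).mp hab
  · rcases ha with rfl | hua
    · exact Or.inr (Or.inl (hF.eq_of_mem_of_mem habF huv))
    · exact absurd ⟨_, habF, Sym2.mem_mk_left a b⟩
        (hS.notMem_matchedVerts_of_mem hua ⟨_, huv, Sym2.mem_mk_left u v⟩)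
  · rcases ha with rfl | hua
    · exact Or.inr (Or.inr (Or.inl habS))
    · rw [Sym2.eq_swap] at hua
      exact Or.inl (hS.eq_of_mem_of_mem habS hua)

lemma edgeBlock_closed (hF : IsMatchingSet G F)
    (hS : IsMatchingSet (G.deleteEdges {e | ∀ x ∈ e, x ∈ matchedVerts F}) S) {u v : V}
    (huv : s(u, v) ∈ F) :
    ∀ a ∈ edgeBlock S u v, ∀ b, (fromEdgeSet (F ∪ S)).Adj a b → b ∈ edgeBlock S u v := by
  have hvu : s(v, u) ∈ F := Sym2.eq_swap ▸ huv
  rintro a (ha | ha | ha | ha) b hab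
  · exact mem_edgeBlock_of_adj_of_mem_left hF hS huv (Or.inl ha) hab
  · exact edgeBlock_comm u v ▸ mem_edgeBlock_of_adj_of_mem_left hF hS hvu (Or.inl ha) hab
  · exact mem_edgeBlock_of_adj_of_mem_left hF hS huv (Or.inr ha) hab
  · exact edgeBlock_comm u v ▸ mem_edgeBlock_of_adj_of_mem_left hF hS hvu (Or.inr ha) hab

lemma exists_isPath_support_edgeBlock (hF : IsMatchingSet G F)
    (hS : IsMatchingSet (G.deleteEdges {e | ∀ x ∈ e, x ∈ matchedVerts F}) S) {u v : V}
    (huv : s(u, v) ∈ F) :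
    ∃ (a c : V) (w : (fromEdgeSet (F ∪ S)).Walk a c), w.IsPath ∧
      (∀ y, y ∈ w.support ↔ y ∈ edgeBlock S u v) ∧ 1 ≤ w.length ∧ w.length ≤ 3 := by
  have hne : u ≠ v := hF.ne_of_mem huv
  have hu : u ∈ matchedVerts F := ⟨_, huv, Sym2.mem_mk_left u v⟩
  have hv : v ∈ matchedVerts F := ⟨_, huv, Sym2.mem_mk_right u v⟩
  have hadj {z p : V} (h : s(z, p) ∈ S) : (fromEdgeSet (F ∪ S)).Adj p z :=
    (fromEdgeSet_adj _).mpr ⟨Or.inr (Sym2.eq_swap ▸ h), (hS.ne_of_mem h).symm⟩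
  have partner_ne {z z' p : V} (hz : z ∈ matchedVerts F) (hz' : z' ∈ matchedVerts F)
      (h : s(z, p) ∈ S) : p ≠ z ∧ p ≠ z' :=
    ⟨(hS.ne_of_mem h).symm, fun hpz => hS.notMem_matchedVerts_of_mem h hz (hpz ▸ hz')⟩
  have hw₀ : (fromEdgeSet (F ∪ S)).Adj u v := (fromEdgeSet_adj _).mpr ⟨Or.inl huv, hne⟩
  obtain ⟨a, w₁, hw₁, hs₁, hl₁, hl₁'⟩ := hw₀.isPath_toWalk.exists_cons_of_subsingleton
    (P := {p | s(u, p) ∈ S}) (fun p hp q hq => hS.eq_of_mem_of_mem hp hq) (fun _ => hadj)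
    fun p hp => by simpa using partner_ne hu hv hp
  obtain ⟨c, w₂, hw₂, hs₂, hl₂, hl₂'⟩ := hw₁.reverse.exists_cons_of_subsingleton
    (P := {q | s(v, q) ∈ S}) (fun p hp q hq => hS.eq_of_mem_of_mem hp hq) (fun _ => hadj)
    fun q hq => by
      have hqu : s(u, q) ∉ S := fun h => hne (hS.eq_of_mem_of_mem
        (Sym2.eq_swap ▸ h) (Sym2.eq_swap ▸ hq))
      simpa [hs₁, hqu] using (partner_ne hv hu hq).symm
  refine ⟨c, a, w₂, hw₂, fun y => ?_, ?_, ?_⟩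
  · simp only [hs₂, Set.mem_ofPred_eq, Walk.support_reverse, List.mem_reverse, hs₁,
      Walk.support_cons, Walk.support_nil, List.mem_cons, List.not_mem_nil, or_false, edgeBlock]
    tauto
  all_goals
    simp only [Walk.length_reverse, Walk.length_cons, Walk.length_nil] at *
    omega

end TwoRoundMatching

end

theorem stmt7_general {V : Type*} [Fintype V]
    (G : SimpleGraph V) [DecidableRel G.Adj]
    (hDirac : ∀ x : V, Fintype.card V ≤ 2 * G.degree x)
    (F S : Set (Sym2 V))
    (hF : IsMaximalMatchingSet G F)
    (hS : IsMaximalMatchingSet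
      (G.deleteEdges {e : Sym2 V | ∀ x ∈ e, ∃ f ∈ F, x ∈ f}) S) :
    (∀ x : V, ∃ e ∈ F ∪ S, x ∈ e) ∧
    (∀ x : V, ∃ (a c : V) (w : (SimpleGraph.fromEdgeSet (F ∪ S)).Walk a c),
      w.IsPath ∧
      (∀ y, y ∈ w.support ↔ (SimpleGraph.fromEdgeSet (F ∪ S)).Reachable x y) ∧
      2 ≤ w.support.length ∧ w.support.length ≤ 4) := by
  have hcover := mem_matchedVerts_union hDirac hF hS
  refine ⟨hcover, fun x => ?_⟩
  obtain ⟨u, v, huv, hx⟩ := exists_mem_edgeBlock hF hS.1 (hcover x)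
  obtain ⟨a, c, w, hw, hsupp, hlen, hlen'⟩ := exists_isPath_support_edgeBlock hF.1 hS.1 huv
  have hclosed : ∀ y ∈ w.support, ∀ z, (fromEdgeSet (F ∪ S)).Adj y z → z ∈ w.support := by
    simpa only [hsupp] using edgeBlock_closed hF.1 hS.1 huv
  refine ⟨a, c, w, hw, w.mem_support_iff_reachable hclosed ((hsupp x).mpr hx), ?_, ?_⟩ <;>
    rw [Walk.length_support] <;> omega

/-- Let `G` be a Dirac graph, `F` a maximal matching of `G`, `F'` the set of vertices matched
by `F`, and `S` a maximal matching of the graph obtained from `G` by deleting all edges with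
both endpoints in `F'`.  Then every vertex of `G` is an endpoint of some edge of `F ∪ S`,
and every connected component of the spanning subgraph with edge set `F ∪ S` is a path with
at least `2` and at most `4` vertices. -/
theorem stmt7 {V : Type*} [Fintype V] [DecidableEq V]
    (G : SimpleGraph V) [DecidableRel G.Adj]
    (hDirac : ∀ x : V, Fintype.card V ≤ 2 * G.degree x)
    (F S : Set (Sym2 V))
    (hF : IsMaximalMatchingSet G F)
    (hS : IsMaximalMatchingSet
      (G.deleteEdges {e : Sym2 V | ∀ x ∈ e, ∃ f ∈ F, x ∈ f}) S) :
    (∀ x : V, ∃ e ∈ F ∪ S, x ∈ e) ∧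
    (∀ x : V, ∃ (a c : V) (w : (SimpleGraph.fromEdgeSet (F ∪ S)).Walk a c),
      w.IsPath ∧
      (∀ y, y ∈ w.support ↔ (SimpleGraph.fromEdgeSet (F ∪ S)).Reachable x y) ∧
      2 ≤ w.support.length ∧ w.support.length ≤ 4) :=
  stmt7_general G hDirac F S hF hS
end

section
/- Let G be a finite simple graph on n ≥ 3 vertices that contains a Hamiltonian path with endpoints u and v. If d(u) + d(v) ≥ n, where d denotes degree in G, then G contains a Hamiltonian cycle. -/
/-!
Let `u = v₀, v₁, …, v_L = v` be the Hamiltonian path, `L = n - 1`. The index sets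
`A = {i < L | u ~ v_{i+1}}` and `B = {i < L | v_i ~ v}` have at least `d(u)` and `d(v)`
elements, and `d(u) + d(v) > L`, so some `i` lies in both. Then
`u, …, v_i, v, v_{L-1}, …, v_{i+1}, u` is a Hamiltonian cycle.
-/

open Finset

namespace SimpleGraph

variable {V : Type*} {G : SimpleGraph V}

lemma degree_le_card_filter_adj [Fintype V] [DecidableRel G.Adj] {x : V} (f : ℕ → V)
    (s : Finset ℕ) (hf : ∀ w, G.Adj x w → ∃ i ∈ s, f i = w) :
    G.degree x ≤ #{i ∈ s | G.Adj x (f i)} := by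
  classical
  calc G.degree x ≤ #(({i ∈ s | G.Adj x (f i)}).image f) := by
        refine card_le_card fun w hw => ?_
        obtain ⟨i, hi, rfl⟩ := hf w ((mem_neighborFinset G x w).1 hw)
        exact mem_image_of_mem f (mem_filter.2 ⟨hi, (mem_neighborFinset G x _).1 hw⟩)
    _ ≤ _ := card_image_le

namespace Walk

variable [DecidableEq V] {u v : V}

lemma IsHamiltonian.exists_crossover [Fintype V] [DecidableRel G.Adj] {p : G.Walk u v}
    (hp : p.IsHamiltonian) (hd : p.length < G.degree u + G.degree v) :
    ∃ i < p.length, G.Adj u (p.getVert (i + 1)) ∧ G.Adj (p.getVert i) v := by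
  have hA := degree_le_card_filter_adj (G := G) (x := u) (fun i => p.getVert (i + 1))
    (range p.length) fun w huw => by
      obtain ⟨m, rfl, hm⟩ := mem_support_iff_exists_getVert.1 (hp.mem_support w)
      have hm0 : m ≠ 0 := by rintro rfl; exact huw.ne p.getVert_zero.symm
      exact ⟨m - 1, mem_range.2 (by omega), by rw [Nat.sub_add_cancel (by omega)]⟩
  have hB := degree_le_card_filter_adj (G := G) (x := v) p.getVert (range p.length)
    fun w hvw => by
      obtain ⟨m, rfl, hm⟩ := mem_support_iff_exists_getVert.1 (hp.mem_support w)
      have hmL : m ≠ p.length := by rintro rfl; exact hvw.ne p.getVert_length.symm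
      exact ⟨m, mem_range.2 (by omega), rfl⟩
  obtain ⟨i, hi⟩ := inter_nonempty_of_card_lt_card_add_card (filter_subset _ (range p.length))
    (filter_subset _ _) (by rw [card_range]; exact hd.trans_le (add_le_add hA hB))
  simp only [mem_inter, mem_filter, mem_range] at hi
  exact ⟨i, hi.1.1, hi.1.2, hi.2.2.symm⟩

lemma IsHamiltonian.take_append_cons_reverse_drop {p : G.Walk u v} (hp : p.IsHamiltonian)
    {i : ℕ} (hi : i < p.length) (h : G.Adj (p.getVert i) v) :
    ((p.take i).append (cons h (p.drop (i + 1)).reverse)).IsHamiltonian := by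
  have hsupp : ((p.take i).append (cons h (p.drop (i + 1)).reverse)).support =
      p.support.take (i + 1) ++ (p.support.drop (i + 1)).reverse := by
    simp [support_append, support_take, Nat.min_eq_left (Nat.succ_le_of_lt hi)]
  intro x
  rw [hsupp, ((p.support.drop (i + 1)).reverse_perm.append_left _).count_eq,
    List.take_append_drop]
  exact hp x

lemma IsHamiltonian.cons_isHamiltonianCycle {p : G.Walk u v} (hp : p.IsHamiltonian)
    (hL : 2 ≤ p.length) (h : G.Adj v u) : (cons h p).IsHamiltonianCycle := by
  simp only [isHamiltonianCycle_isCycle_and_isHamiltonian_tail,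
    isCycle_iff_isPath_tail_and_le_length, tail_cons, length_cons]
  exact ⟨⟨by simpa using hp.isPath, by omega⟩, by simpa [IsHamiltonian] using hp⟩

end Walk

end SimpleGraph

open SimpleGraph Walk in
/-- Let `G` be a finite simple graph on `n ≥ 3` vertices containing a Hamiltonian path with
endpoints `u` and `v`.  If `d(u) + d(v) ≥ n`, then `G` contains a Hamiltonian cycle. -/
theorem stmt8 {V : Type*} [Fintype V] [DecidableEq V]
    (G : SimpleGraph V) [DecidableRel G.Adj]
    (h3 : 3 ≤ Fintype.card V)
    {u v : V} (p : G.Walk u v) (hp : p.IsHamiltonian)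
    (hd : Fintype.card V ≤ G.degree u + G.degree v) :
    ∃ (a : V) (c : G.Walk a a), c.IsHamiltonianCycle := by
  have hL := hp.length_eq
  obtain ⟨i, hi, hu, hv⟩ := hp.exists_crossover (by omega)
  have hq := hp.take_append_cons_reverse_drop hi hv
  exact ⟨_, _, hq.cons_isHamiltonianCycle (by rw [hq.length_eq]; omega) hu.symm⟩
end

section
/- Let G be an RK graph on n vertices and let v* be a vertex of G with d(v*) < n/2. Then every vertex of G is at distance at most 4 from v*. -/
/-!
Suppose `δ(u, v) = k ≥ 5` and pick, on a geodesic from `u` to `v`, the vertices `y` and `x` at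
distance `2` from `u` and from `v` respectively. The pairs `(u, y)` and `(x, v)` are at distance
`2`, so the RK condition gives `d(u) + d(y) ≥ n - 1` and `d(x) + d(v) ≥ n - 1`. The pairs
`(u, x)` and `(y, v)` are at distance `k - 2 ≥ 3`, so their closed neighbourhoods are disjoint
and `d(u) + d(x) ≤ n - 2`, `d(y) + d(v) ≤ n - 2`. Adding up gives `2n - 2 ≤ 2n - 4`. Hence every
RK graph has diameter at most `4`.
-/

/-- An RK (Rahman–Kaykobad) graph: a connected finite simple graph on `n` vertices such that
for every pair of distinct nonadjacent vertices `u, v` it holds that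
`d(u) + d(v) + δ(u, v) ≥ n + 1`. -/
def IsRKGraph {V : Type*} [Fintype V] (G : SimpleGraph V) [DecidableRel G.Adj] : Prop :=
  G.Connected ∧ ∀ u v : V, u ≠ v → ¬ G.Adj u v →
    Fintype.card V + 1 ≤ G.degree u + G.degree v + G.dist u v

namespace SimpleGraph

variable {V : Type*} {G : SimpleGraph V}

lemma Connected.exists_dist_eq_and_dist_eq_sub (hG : G.Connected) (u v : V) {j : ℕ}
    (hj : j ≤ G.dist u v) : ∃ x, G.dist u x = j ∧ G.dist x v = G.dist u v - j := by
  obtain ⟨p, hp⟩ := hG.exists_walk_length_eq_dist u v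
  have hux : G.dist u (p.getVert j) ≤ j := by
    simpa [Walk.take_length, hp, hj] using G.dist_le (p.take j)
  have hxv : G.dist (p.getVert j) v ≤ G.dist u v - j := by
    simpa [Walk.drop_length, hp] using G.dist_le (p.drop j)
  have := hG.dist_triangle (u := u) (v := p.getVert j) (w := v)
  exact ⟨p.getVert j, by omega, by omega⟩

lemma ne_and_not_adj_of_two_le_dist {u v : V} (h : 2 ≤ G.dist u v) : u ≠ v ∧ ¬G.Adj u v := by
  refine ⟨?_, fun hadj => ?_⟩
  · rintro rfl
    simp at h
  · rw [← dist_eq_one_iff_adj] at hadj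
    omega

section Finite

variable [Fintype V] [DecidableRel G.Adj]

lemma disjoint_insert_neighborFinset_of_three_le_dist [DecidableEq V] {a b : V}
    (h : 3 ≤ G.dist a b) :
    Disjoint (insert a (G.neighborFinset a)) (insert b (G.neighborFinset b)) := by
  rw [Finset.disjoint_left]
  intro w hwa hwb
  simp only [Finset.mem_insert, mem_neighborFinset] at hwa hwb
  have hreach : G.Reachable a w := by
    rcases hwa with rfl | hadj
    exacts [.rfl, hadj.reachable]
  have haw : G.dist a w ≤ 1 := by
    rcases hwa with rfl | hadj
    exacts [by simp, (dist_eq_one_iff_adj.mpr hadj).le]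
  have hwb : G.dist w b ≤ 1 := by
    rcases hwb with rfl | hadj
    exacts [by simp, (dist_eq_one_iff_adj.mpr hadj.symm).le]
  have := hreach.dist_triangle_left b
  omega

lemma degree_add_degree_add_two_le_card_of_three_le_dist {a b : V} (h : 3 ≤ G.dist a b) :
    G.degree a + G.degree b + 2 ≤ Fintype.card V := by
  classical
  have := Finset.card_le_univ (insert a (G.neighborFinset a) ∪ insert b (G.neighborFinset b))
  rwa [Finset.card_union_of_disjoint (disjoint_insert_neighborFinset_of_three_le_dist h),
    Finset.card_insert_of_notMem (G.notMem_neighborFinset_self a),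
    Finset.card_insert_of_notMem (G.notMem_neighborFinset_self b),
    card_neighborFinset_eq_degree, card_neighborFinset_eq_degree, add_add_add_comm] at this

end Finite

end SimpleGraph

open SimpleGraph

section RKGraph

variable {V : Type*} [Fintype V] {G : SimpleGraph V} [DecidableRel G.Adj]

lemma IsRKGraph.card_le_degree_add_degree_add_one_of_dist_eq_two (hG : IsRKGraph G) {a b : V}
    (h : G.dist a b = 2) : Fintype.card V ≤ G.degree a + G.degree b + 1 := by
  obtain ⟨hne, hnadj⟩ := ne_and_not_adj_of_two_le_dist h.ge
  have := hG.2 a b hne hnadj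
  omega

theorem IsRKGraph.dist_le_four (hG : IsRKGraph G) (u v : V) : G.dist u v ≤ 4 := by
  by_contra! h
  obtain ⟨y, huy, hyv⟩ := hG.1.exists_dist_eq_and_dist_eq_sub u v (j := 2) (by omega)
  obtain ⟨x, hux, hxv⟩ :=
    hG.1.exists_dist_eq_and_dist_eq_sub u v (j := G.dist u v - 2) (by omega)
  have huy_near := hG.card_le_degree_add_degree_add_one_of_dist_eq_two huy
  have hxv_near := hG.card_le_degree_add_degree_add_one_of_dist_eq_two (a := x) (b := v)
    (by omega)
  have hux_far := degree_add_degree_add_two_le_card_of_three_le_dist (G := G) (a := u) (b := x)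
    (by omega)
  have hyv_far := degree_add_degree_add_two_le_card_of_three_le_dist (G := G) (a := y) (b := v)
    (by omega)
  omega

end RKGraph

theorem stmt10_general {V : Type*} [Fintype V] (G : SimpleGraph V) [DecidableRel G.Adj]
    (hRK : IsRKGraph G) (vstar : V) :
    ∀ u : V, G.dist u vstar ≤ 4 :=
  fun u => hRK.dist_le_four u vstar

/-- In an RK graph on `n` vertices, if `v*` has degree less than `n / 2`, then every vertex
is at distance at most `4` from `v*`. -/
theorem stmt10 {V : Type*} [Fintype V] (G : SimpleGraph V) [DecidableRel G.Adj]
    (hRK : IsRKGraph G) (vstar : V)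
    (hv : 2 * G.degree vstar < Fintype.card V) :
    ∀ u : V, G.dist u vstar ≤ 4 :=
  stmt10_general G hRK vstar
end

section
/- Let G be an RK graph on n vertices and let v* be a vertex of G with d(v*) < n/2. Define B = {u : δ(u, v*) = 2}, C = {u : δ(u, v*) = 3}, and D = {u : δ(u, v*) = 4}. If D ≠ ∅, then |B| = 1, any two distinct vertices of D are adjacent, and every vertex of C is adjacent to every vertex of D. -/
/-!
Fix `u` with `δ(u, v*) = 4`. Every neighbour of `u` lies at distance `≥ 3` from `v*`, so
`d(u) ≤ n - 1 - |{w : δ(w, v*) ≤ 2}| = n - 2 - d(v*) - |B|`. Plugging this into the RK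
condition for the nonadjacent pair `u, v*` gives `|B| ≤ 1`; a shortest path from `u` to `v*`
shows `B ≠ ∅`. With `|B| = 1` the bound on `d(u)` is attained, so `u` is adjacent to every
other vertex at distance `≥ 3` from `v*`, which covers both `C` and `D`.
-/

open Finset

namespace SimpleGraph

variable {V : Type*} {G : SimpleGraph V} {u v w : V}

lemma Adj.dist_le_dist_add_one (h : G.Adj u w) (v : V) : G.dist u v ≤ G.dist w v + 1 := by
  rw [dist_comm, dist_comm (u := w)]
  rcases h.symm.diff_dist_adj (u := v) with h' | h' | h' <;> omega

lemma Connected.exists_adj_dist_eq (hc : G.Connected) {n : ℕ} (h : G.dist u v = n + 1) :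
    ∃ w, G.Adj u w ∧ G.dist w v = n := by
  obtain ⟨p, hp⟩ := hc.exists_walk_length_eq_dist u v
  cases p with
  | nil => simp at h
  | @cons _ w _ hadj q =>
    have hq : G.dist w v ≤ n := by
      have := G.dist_le q
      simp only [Walk.length_cons] at hp
      omega
    exact ⟨w, hadj, le_antisymm hq (by have := hadj.dist_le_dist_add_one v; omega)⟩

variable [Fintype V]

lemma card_filter_dist_le_succ (v : V) (r : ℕ) :
    #{w | G.dist w v ≤ r + 1} = #{w | G.dist w v ≤ r} + #{w | G.dist w v = r + 1} := by
  classical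
  rw [← card_union_of_disjoint (disjoint_filter.2 fun _ _ _ => by omega), ← filter_or]
  congr 1
  ext w
  simp only [mem_filter, mem_univ, true_and]
  exact Nat.le_succ_iff

variable [DecidableRel G.Adj]

lemma Connected.card_filter_dist_le_one (hc : G.Connected) (v : V) :
    #{w | G.dist w v ≤ 1} = G.degree v + 1 := by
  classical
  have : ({w | G.dist w v ≤ 1} : Finset V) = insert v (G.neighborFinset v) := by
    ext w
    rw [mem_filter, mem_insert, mem_neighborFinset, Nat.le_one_iff_eq_zero_or_eq_one,
      hc.dist_eq_zero_iff, dist_eq_one_iff_adj, adj_comm]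
    simp
  rw [this, card_insert_of_notMem (by simp), card_neighborFinset_eq_degree]

lemma neighborFinset_subset_erase_filter_lt_dist [DecidableEq V] {r : ℕ}
    (h : r + 1 < G.dist u v) :
    G.neighborFinset u ⊆ ({w | r < G.dist w v} : Finset V).erase u := by
  intro w hw
  rw [mem_neighborFinset] at hw
  have := hw.dist_le_dist_add_one v
  exact mem_erase.2 ⟨hw.ne', mem_filter.2 ⟨mem_univ w, by omega⟩⟩

end SimpleGraph

open SimpleGraph

namespace IsRKGraph

variable {V : Type*} [Fintype V] [DecidableEq V] {G : SimpleGraph V} [DecidableRel G.Adj]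
  {u v w : V}

lemma card_far_add_card_dist_eq_two_le (hRK : IsRKGraph G) (hu : G.dist u v = 4) :
    #(({w | 2 < G.dist w v} : Finset V).erase u) + #{w | G.dist w v = 2} ≤ G.degree u + 1 := by
  have hne : u ≠ v := by rintro rfl; simp at hu
  have hnadj : ¬ G.Adj u v := by rw [← dist_eq_one_iff_adj]; omega
  have hrk := hRK.2 u v hne hnadj
  have hsplit := card_filter_add_card_filter_not (s := univ) (fun w => G.dist w v ≤ 2)
  simp only [not_le, card_univ] at hsplit
  have hball : #{w | G.dist w v ≤ 2} = G.degree v + 1 + #{w | G.dist w v = 2} := by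
    rw [← hRK.1.card_filter_dist_le_one]
    exact card_filter_dist_le_succ v 1
  have hfar := card_erase_add_one (s := ({w | 2 < G.dist w v} : Finset V))
    (mem_filter.2 ⟨mem_univ u, by omega⟩)
  omega

lemma card_filter_dist_eq_two_le_one (hRK : IsRKGraph G) (hu : G.dist u v = 4) :
    #{w | G.dist w v = 2} ≤ 1 := by
  have hcard := hRK.card_far_add_card_dist_eq_two_le hu
  have hsub := neighborFinset_subset_erase_filter_lt_dist (G := G) (r := 2) (u := u) (v := v)
    (by omega)
  have := card_le_card hsub
  rw [card_neighborFinset_eq_degree] at this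
  omega

lemma adj_of_dist_eq_four (hRK : IsRKGraph G) (hu : G.dist u v = 4)
    (hB : #{w | G.dist w v = 2} = 1) (hw : 2 < G.dist w v) (hwu : w ≠ u) : G.Adj u w := by
  have hsub := neighborFinset_subset_erase_filter_lt_dist (G := G) (r := 2) (u := u) (v := v)
    (by omega)
  have hcard := hRK.card_far_add_card_dist_eq_two_le hu
  rw [← card_neighborFinset_eq_degree] at hcard
  rw [← mem_neighborFinset, eq_of_subset_of_card_le hsub (by omega)]
  exact mem_erase.2 ⟨hwu, mem_filter.2 ⟨mem_univ w, hw⟩⟩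

end IsRKGraph

theorem stmt11_general {V : Type*} [Fintype V] (G : SimpleGraph V) [DecidableRel G.Adj]
    (hRK : IsRKGraph G) (vstar : V)
    (hD : ({u : V | G.dist u vstar = 4}).Nonempty) :
    (∃ b : V, {u : V | G.dist u vstar = 2} = {b}) ∧
    (∀ x ∈ {u : V | G.dist u vstar = 4}, ∀ y ∈ {u : V | G.dist u vstar = 4},
      x ≠ y → G.Adj x y) ∧
    (∀ c ∈ {u : V | G.dist u vstar = 3}, ∀ d ∈ {u : V | G.dist u vstar = 4},
      G.Adj c d) := by
  classical
  obtain ⟨u, hu : G.dist u vstar = 4⟩ := hD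
  obtain ⟨w, -, hw⟩ := hRK.1.exists_adj_dist_eq (n := 3) hu
  obtain ⟨b, -, hb⟩ := hRK.1.exists_adj_dist_eq (n := 2) hw
  have hBle := hRK.card_filter_dist_eq_two_le_one hu
  have hB : #{w | G.dist w vstar = 2} = 1 :=
    le_antisymm hBle (card_pos.2 ⟨b, mem_filter.2 ⟨mem_univ b, hb⟩⟩)
  refine ⟨⟨b, Set.ext fun z => ⟨fun hz => ?_, fun hz => hz ▸ hb⟩⟩, ?_, ?_⟩
  · exact card_le_one.1 hBle z (mem_filter.2 ⟨mem_univ z, hz⟩) b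
      (mem_filter.2 ⟨mem_univ b, hb⟩)
  · intro x (hx : G.dist x vstar = 4) y (hy : G.dist y vstar = 4) hxy
    exact hRK.adj_of_dist_eq_four hx hB (by omega) hxy.symm
  · intro c (hc : G.dist c vstar = 3) d (hd : G.dist d vstar = 4)
    exact (hRK.adj_of_dist_eq_four hd hB (by omega) (by rintro rfl; omega)).symm

/-- In an RK graph on `n` vertices with a vertex `v*` of degree less than `n / 2`, let
`B`, `C`, `D` be the sets of vertices at distance exactly `2`, `3`, `4` from `v*`.
If `D ≠ ∅`, then `|B| = 1`, any two distinct vertices of `D` are adjacent, and every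
vertex of `C` is adjacent to every vertex of `D`. -/
theorem stmt11 {V : Type*} [Fintype V] (G : SimpleGraph V) [DecidableRel G.Adj]
    (hRK : IsRKGraph G) (vstar : V)
    (hv : 2 * G.degree vstar < Fintype.card V)
    (hD : ({u : V | G.dist u vstar = 4}).Nonempty) :
    (∃ b : V, {u : V | G.dist u vstar = 2} = {b}) ∧
    (∀ x ∈ {u : V | G.dist u vstar = 4}, ∀ y ∈ {u : V | G.dist u vstar = 4},
      x ≠ y → G.Adj x y) ∧
    (∀ c ∈ {u : V | G.dist u vstar = 3}, ∀ d ∈ {u : V | G.dist u vstar = 4},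
      G.Adj c d) :=
  stmt11_general G hRK vstar hD
end

section
/- Let G be an RK graph on n vertices and let v* be a vertex of G with d(v*) < n/2. Define B = {u : δ(u, v*) = 2}, C = {u : δ(u, v*) = 3}, and D = {u : δ(u, v*) = 4}. If D = ∅, then for every c ∈ C the neighborhood of c in G is exactly (B ∪ C) \ {c}. -/
/-!
Applied to `c` at distance `3` from `v*`, the RK inequality gives `d(c) ≥ n - 2 - d(v*)`.
But every neighbour of `c` is at distance at least `2` from `v*`, and there are exactly
`n - 2 - d(v*)` such vertices other than `c`; so `c` is adjacent to all of them. Since `D = ∅`,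
no vertex lies at distance `≥ 4` from `v*`, and these vertices are exactly `(B ∪ C) \ {c}`.
-/

namespace SimpleGraph

variable {V : Type*} {G : SimpleGraph V} {u v : V}

lemma Reachable.exists_dist_eq_of_le_dist (h : G.Reachable u v) {k : ℕ}
    (hk : k ≤ G.dist u v) : ∃ w, G.dist w v = k := by
  obtain ⟨p, hp⟩ := h.symm.exists_walk_length_eq_dist
  refine ⟨p.getVert k, ?_⟩
  have h_take := dist_le (p.take k)
  have h_drop := dist_le (p.drop k)
  have h_tri := (p.take k).reachable.dist_triangle_left u
  rw [Walk.take_length] at h_take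
  rw [Walk.drop_length] at h_drop
  rw [dist_comm] at hk ⊢
  omega

lemma Connected.dist_le_of_forall_dist_ne (hG : G.Connected) {k : ℕ}
    (h : ∀ w, G.dist w v ≠ k + 1) (u : V) : G.dist u v ≤ k := by
  by_contra! hlt
  obtain ⟨w, hw⟩ := (hG u v).exists_dist_eq_of_le_dist hlt
  exact h w hw

lemma Connected.two_le_dist_iff (hG : G.Connected) : 2 ≤ G.dist u v ↔ u ≠ v ∧ ¬G.Adj u v := by
  rw [← dist_eq_one_iff_adj, Ne, ← hG.dist_eq_zero_iff]
  omega

lemma Adj.two_le_dist_of_three_le_dist {c : V} (hadj : G.Adj c u) (hc : 3 ≤ G.dist c v) :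
    2 ≤ G.dist u v := by
  have h_tri := hadj.reachable.dist_triangle_left v
  rw [dist_eq_one_iff_adj.mpr hadj] at h_tri
  omega

lemma Connected.neighborSet_eq_of_card_add_one_le_degree_add_degree [Fintype V] [DecidableRel G.Adj] (hG : G.Connected)
    {c : V} (hc : 3 ≤ G.dist c v) (hdeg : Fintype.card V + 1 ≤ G.degree c + G.degree v + 3) :
    G.neighborSet c = {u | 2 ≤ G.dist u v} \ {c} := by
  classical
  have hfar : ∀ u, 2 ≤ G.dist u v ↔ u ∈ (insert v (G.neighborFinset v))ᶜ := fun u ↦ by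
    simp [hG.two_le_dist_iff, adj_comm]
  set S := (insert v (G.neighborFinset v))ᶜ.erase c
  have hsub : G.neighborFinset c ⊆ S := fun u hu ↦ by
    rw [mem_neighborFinset] at hu
    exact Finset.mem_erase.mpr ⟨hu.ne', (hfar u).mp (hu.two_le_dist_of_three_le_dist hc)⟩
  have hcard : S.card ≤ (G.neighborFinset c).card := by
    rw [Finset.card_erase_of_mem ((hfar c).mp (by omega)), Finset.card_compl,
      Finset.card_insert_of_notMem (notMem_neighborFinset_self G v),
      card_neighborFinset_eq_degree, card_neighborFinset_eq_degree]
    omega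
  have heq := Finset.eq_of_subset_of_card_le hsub hcard
  ext u
  rw [mem_neighborSet, ← mem_neighborFinset, heq, Finset.mem_erase, ← hfar]
  simp [and_comm]

end SimpleGraph

theorem stmt13_general {V : Type*} [Fintype V] (G : SimpleGraph V) [DecidableRel G.Adj]
    (hRK : IsRKGraph G) (vstar : V)
    (hD : {u : V | G.dist u vstar = 4} = ∅) :
    ∀ c ∈ {u : V | G.dist u vstar = 3},
      G.neighborSet c =
        ({u : V | G.dist u vstar = 2} ∪ {u : V | G.dist u vstar = 3}) \ {c} := by
  obtain ⟨hG, hdeg_sum⟩ := hRK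
  intro c (hc : G.dist c vstar = 3)
  obtain ⟨hne, hnadj⟩ := hG.two_le_dist_iff.mp (show 2 ≤ G.dist c vstar by omega)
  have hdeg := hdeg_sum c vstar hne hnadj
  rw [hc] at hdeg
  have hle : ∀ u, G.dist u vstar ≤ 3 :=
    hG.dist_le_of_forall_dist_ne (Set.eq_empty_iff_forall_notMem.mp hD)
  rw [hG.neighborSet_eq_of_card_add_one_le_degree_add_degree hc.ge hdeg]
  ext u
  have := hle u
  exact and_congr_left' (by simp only [Set.mem_union, Set.mem_ofPred_eq]; omega)

/-- In an RK graph on `n` vertices with a vertex `v*` of degree less than `n / 2`, let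
`B`, `C`, `D` be the sets of vertices at distance exactly `2`, `3`, `4` from `v*`.
If `D = ∅`, then for every `c ∈ C` the neighborhood of `c` is exactly `(B ∪ C) \ {c}`. -/
theorem stmt13 {V : Type*} [Fintype V] (G : SimpleGraph V) [DecidableRel G.Adj]
    (hRK : IsRKGraph G) (vstar : V)
    (hv : 2 * G.degree vstar < Fintype.card V)
    (hD : {u : V | G.dist u vstar = 4} = ∅) :
    ∀ c ∈ {u : V | G.dist u vstar = 3},
      G.neighborSet c =
        ({u : V | G.dist u vstar = 2} ∪ {u : V | G.dist u vstar = 3}) \ {c} :=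
  stmt13_general G hRK vstar hD
end
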